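/- Let k be a field, n ≥ 2, R = k[X_1,...,X_n]/(X_1^2,...,X_n^2) with images x_1,...,x_n, I = (x_i x_j : 1 ≤ i < j ≤ n), and M = R/I. Then M is a non-free R-module, type(M) = n, μ(Hom_R(M,R)) = n, type(R) = 1, and hence type(M) = μ(Hom_R(M,R)) · type(R). -/

import Mathlib

set_option synthInstance.maxHeartbeats 2000000
set_option maxHeartbeats 4000000

open TensorProduct

universe u

/-- The polynomial ring `k[X_1, …, X_n]`. -/
abbrev Poly9 (k : Type u) [Field k] (n : ℕ) : Type u := MvPolynomial (Fin n) k

/-- The ring `R = k[X_1, …, X_n] / (X_1^2, …, X_n^2)`. -/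
abbrev Ring9 (k : Type u) [Field k] (n : ℕ) : Type u :=
  Poly9 k n ⧸ Ideal.span (Set.range fun i : Fin n => (MvPolynomial.X i : Poly9 k n) ^ 2)

/-- The image `x i` of `X i` in `R`. -/
noncomputable def x9 (k : Type u) [Field k] (n : ℕ) (i : Fin n) : Ring9 k n :=
  Ideal.Quotient.mk _ (MvPolynomial.X i)

/-- The ideal `I = (x_i x_j : i < j)` of `R`. -/
noncomputable def I9 (k : Type u) [Field k] (n : ℕ) : Ideal (Ring9 k n) :=
  Ideal.span {p : Ring9 k n | ∃ i j : Fin n, i < j ∧ p = x9 k n i * x9 k n j}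

/-- The module `M = R / I`. -/
abbrev M9 (k : Type u) [Field k] (n : ℕ) : Type u := Ring9 k n ⧸ I9 k n

/-- The residue field `K = R / (x_1, …, x_n)` (isomorphic to `k`). -/
abbrev K9 (k : Type u) [Field k] (n : ℕ) : Type u :=
  Ring9 k n ⧸ Ideal.span (Set.range (x9 k n))

/-!
The squarefree monomials `x_S = ∏_{i ∈ S} x_i`, `S ⊆ {1, …, n}`, form a `k`-basis of `R`, with
`x_S x_T = x_{S ∪ T}` for disjoint `S, T` and `x_S x_T = 0` otherwise. Hence an ideal generated by
monomials, and the annihilator of such an ideal, are spanned by the monomials they contain, and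
every invariant becomes a count of sets: `soc R = k x_{[n]}`; `soc M` has basis the images of
`x_1, …, x_n`; `Hom_R(M, R) ≅ (0 : I)` has basis `x_{[n]}` and the `x_{[n] ∖ i}`, and since
`m² ⊆ I` we get `m (0 : I) = soc R`, so `μ(Hom_R(M, R)) = (n + 1) - 1`. Finally `M` is not free
because a nonzero free module is faithful, while `I ≠ 0` kills `M`.
-/

theorem Submodule.finrank_eq_of_restrictScalars_eq {K R N : Type*} [Semiring K] [Semiring R]
    [AddCommMonoid N] [Module R N] [Module K N] [SMul K R] [IsScalarTower K R N]
    {p : Submodule R N} {q : Submodule K N} (h : p.restrictScalars K = q) :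
    Module.finrank K p = Module.finrank K q :=
  (LinearEquiv.ofEq _ _ h).finrank_eq

open Finset in
theorem Finset.forall_card_eq_two_not_disjoint_iff {α : Type*} [Fintype α] [DecidableEq α]
    {T : Finset α} : (∀ U : Finset α, #U = 2 → ¬ Disjoint U T) ↔ #Tᶜ ≤ 1 := by
  simp_rw [← subset_compl_iff_disjoint_right]
  refine ⟨fun h => ?_, fun h U hU hUT => ?_⟩
  · by_contra! hc
    obtain ⟨U, hUT, hU⟩ := exists_subset_card_eq hc
    exact h U hU hUT
  · have := card_le_card hUT
    omega

open Finset in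
theorem Finset.card_filter_card_compl_le_one {α : Type*} [Fintype α] [DecidableEq α] :
    #{T : Finset α | #Tᶜ ≤ 1} = Fintype.card α + 1 := by
  have hcompl : #{T : Finset α | #Tᶜ ≤ 1} = #{U : Finset α | #U ≤ 1} :=
    card_nbij' compl compl (fun T hT => by simpa using hT) (fun U hU => by simpa using hU)
      (fun T _ => compl_compl T) (fun U _ => compl_compl U)
  have hsplit : ({U : Finset α | #U ≤ 1} : Finset (Finset α)) =
      ({U : Finset α | #U = 0} : Finset (Finset α)) ∪
        ({U : Finset α | #U = 1} : Finset (Finset α)) := by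
    ext
    simp only [mem_filter, mem_univ, true_and, mem_union]
    omega
  rw [hcompl, hsplit, card_union_of_disjoint, univ_filter_card_eq, univ_filter_card_eq,
    card_powersetCard, card_powersetCard, card_univ]
  · simp [add_comm]
  · exact disjoint_filter.mpr fun _ _ h => by omega

open Submodule in
noncomputable def Ideal.quotientHomEquivTorsionBySet {R : Type*} [CommRing R] (a : Ideal R)
    (N : Type*) [AddCommGroup N] [Module R N] :
    (R ⧸ a →ₗ[R] N) ≃ₗ[R] torsionBySet R N a where
  toFun φ := ⟨φ (Submodule.Quotient.mk (1 : R)), (mem_torsionBySet_iff _ _).mpr fun ⟨r, hr⟩ => by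
    rw [← map_smul, ← Submodule.Quotient.mk_smul, smul_eq_mul, mul_one,
      (Submodule.Quotient.mk_eq_zero a).mpr hr, map_zero]⟩
  map_add' _ _ := rfl
  map_smul' _ _ := rfl
  invFun y := a.liftQ (LinearMap.toSpanSingleton R N y) fun r hr => by
    simpa using (mem_torsionBySet_iff _ _).mp y.2 ⟨r, hr⟩
  left_inv φ := by
    ext
    simp
  right_inv y := by
    ext
    exact (liftQ_apply _ _ _).trans (one_smul R _)

theorem Ideal.not_free_quotient {R : Type*} [CommRing R] {I : Ideal R} (h₀ : I ≠ ⊥)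
    (h₁ : I ≠ ⊤) : ¬ Module.Free R (R ⧸ I) := by
  intro _
  have := Ideal.Quotient.nontrivial_iff.mpr h₁
  exact h₀ (by rw [← I.annihilator_quotient, Module.annihilator_eq_bot]; infer_instance)

namespace Ring9

open MvPolynomial

variable {k : Type u} [Field k] {n : ℕ}

theorem x9_mul_self (i : Fin n) : x9 k n i * x9 k n i = 0 := by
  rw [x9, ← map_mul, Ideal.Quotient.eq_zero_iff_mem, ← sq]
  exact Ideal.subset_span ⟨i, rfl⟩

variable (k) in
noncomputable def xProd (S : Finset (Fin n)) : Ring9 k n := ∏ i ∈ S, x9 k n i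

@[simp]
theorem xProd_empty : xProd k (∅ : Finset (Fin n)) = 1 := Finset.prod_empty

@[simp]
theorem xProd_singleton (i : Fin n) : xProd k {i} = x9 k n i := Finset.prod_singleton _ _

theorem xProd_mul_xProd_of_disjoint {S T : Finset (Fin n)} (h : Disjoint S T) :
    xProd k S * xProd k T = xProd k (S ∪ T) :=
  (Finset.prod_union h).symm

theorem xProd_mul_xProd_of_not_disjoint {S T : Finset (Fin n)} (h : ¬ Disjoint S T) :
    xProd k S * xProd k T = 0 := by
  obtain ⟨i, hS, hT⟩ := Finset.not_disjoint_iff.mp h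
  rw [xProd, xProd, ← Finset.mul_prod_erase S _ hS, ← Finset.mul_prod_erase T _ hT,
    mul_mul_mul_comm, x9_mul_self, zero_mul]

theorem xProd_eq_mk (S : Finset (Fin n)) :
    xProd k S = Ideal.Quotient.mk _ (monomial (Finsupp.indicator S fun _ _ => 1) (1 : k)) := by
  rw [← prod_X_pow (fun _ => 1), map_prod]
  simp [xProd, x9]

theorem mem_span_X_sq_iff (p : Poly9 k n) :
    p ∈ Ideal.span (Set.range fun i : Fin n => (X i : Poly9 k n) ^ 2) ↔
      ∀ d ∈ p.support, ∃ i, 2 ≤ d i := by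
  have : (Set.range fun i : Fin n => (X i : Poly9 k n) ^ 2) =
      (fun d => monomial d 1) '' Set.range fun i => Finsupp.single i 2 := by
    rw [← Set.range_comp]
    simp [Function.comp_def, X_pow_eq_monomial]
  simp [this, mem_ideal_span_monomial_image, Finsupp.single_le_iff]

theorem linearIndependent_xProd : LinearIndependent k (xProd k (n := n)) := by
  let e : Finset (Fin n) → Fin n →₀ ℕ := fun S => Finsupp.indicator S fun _ _ => 1
  have he : Function.Injective e := fun S T h => by
    ext i
    have := DFunLike.congr_fun h i
    simp only [e, Finsupp.indicator_apply] at this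
    split_ifs at this <;> simp_all
  rw [Fintype.linearIndependent_iff]
  intro g hg T
  -- `p` lifts the relation; it lies in `(X_i ^ 2)` but only has squarefree exponents, so `p = 0`.
  let p : Poly9 k n := ∑ S, monomial (e S) (g S)
  have hp : p ∈ Ideal.span (Set.range fun i : Fin n => (X i : Poly9 k n) ^ 2) := by
    have (S : Finset (Fin n)) :
        Ideal.Quotient.mk _ (monomial (e S) (g S)) = g S • xProd k S := by
      rw [xProd_eq_mk, ← Ideal.Quotient.mkₐ_eq_mk k, ← map_smul, smul_monomial, smul_eq_mul,
        mul_one]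
    rw [← Ideal.Quotient.eq_zero_iff_mem, ← hg, map_sum]
    exact Finset.sum_congr rfl fun S _ => this S
  have hcoeff : p.coeff (e T) = g T := by
    simp [p, coeff_sum, coeff_monomial, he.eq_iff]
  by_contra hT
  obtain ⟨i, hi⟩ := (mem_span_X_sq_iff p).mp hp (e T) (by rwa [mem_support_iff, hcoeff])
  have : e T i ≤ 1 := by simp only [e, Finsupp.indicator_apply]; split <;> simp
  omega

theorem span_xProd : Submodule.span k (Set.range (xProd k (n := n))) = ⊤ := by
  set V := Submodule.span k (Set.range (xProd k (n := n)))
  have hmul (i : Fin n) : V ≤ V.comap (LinearMap.mulRight k (x9 k n i)) := by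
    refine Submodule.span_le.mpr (Set.range_subset_iff.mpr fun S => ?_)
    change xProd k S * x9 k n i ∈ V
    by_cases h : Disjoint S {i}
    · rw [← xProd_singleton, xProd_mul_xProd_of_disjoint h]
      exact Submodule.subset_span ⟨_, rfl⟩
    · rw [← xProd_singleton, xProd_mul_xProd_of_not_disjoint h]
      exact V.zero_mem
  refine Submodule.eq_top_iff'.mpr fun y => ?_
  obtain ⟨p, rfl⟩ := Ideal.Quotient.mk_surjective y
  induction p using MvPolynomial.induction_on with
  | C a =>
    rw [← mul_one (C a), ← smul_eq_C_mul, ← Ideal.Quotient.mkₐ_eq_mk k, map_smul, map_one,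
      ← xProd_empty]
    exact V.smul_mem a (Submodule.subset_span ⟨∅, rfl⟩)
  | add p q hp hq =>
    rw [map_add]
    exact V.add_mem hp hq
  | mul_X p i hp =>
    rw [map_mul]
    exact hmul i hp

variable (k n) in
noncomputable def xBasis : Module.Basis (Finset (Fin n)) k (Ring9 k n) :=
  Module.Basis.mk linearIndependent_xProd span_xProd.ge

@[simp]
theorem coe_xBasis : ⇑(xBasis k n) = xProd k := Module.Basis.coe_mk _ _

instance : Module.Finite k (Ring9 k n) := .of_basis (xBasis k n)

variable (k) in
noncomputable abbrev xSpan (s : Set (Finset (Fin n))) : Submodule k (Ring9 k n) :=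
  Submodule.span k (xProd k '' s)

theorem mem_xSpan_iff {s : Set (Finset (Fin n))} {z : Ring9 k n} :
    z ∈ xSpan k s ↔ ∀ S ∉ s, (xBasis k n).repr z S = 0 := by
  rw [xSpan, ← coe_xBasis, Module.Basis.mem_span_image]
  refine ⟨fun h S hS => ?_, fun h S hS => ?_⟩
  · by_contra h'
    exact hS (h (Finsupp.mem_support_iff.mpr h'))
  · by_contra h'
    exact Finsupp.mem_support_iff.mp hS (h S h')

theorem finrank_xSpan (s : Finset (Finset (Fin n))) :
    Module.finrank k (xSpan k (s : Set (Finset (Fin n)))) = s.card := by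
  rw [xSpan, ← coe_xBasis, Set.image_eq_range]
  exact (finrank_span_eq_card ((xBasis k n).linearIndependent.comp _ Subtype.val_injective)).trans
    (Fintype.card_coe s)

theorem disjoint_xSpan {s t : Set (Finset (Fin n))} (h : Disjoint s t) :
    Disjoint (xSpan k s) (xSpan k t) := by
  rw [xSpan, xSpan, ← coe_xBasis]
  exact (xBasis k n).linearIndependent.disjoint_span_image h

theorem repr_xProd_mul {U T : Finset (Fin n)} (h : Disjoint U T) (r : Ring9 k n) :
    (xBasis k n).repr (xProd k U * r) (U ∪ T) = (xBasis k n).repr r T := by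
  have : (xBasis k n).coord (U ∪ T) ∘ₗ LinearMap.mulLeft k (xProd k U) =
      (xBasis k n).coord T := by
    refine (xBasis k n).ext fun S => ?_
    simp only [LinearMap.comp_apply, LinearMap.mulLeft_apply, Module.Basis.coord_apply,
      Module.Basis.repr_self, Finsupp.single_apply]
    rw [coe_xBasis]
    by_cases hS : Disjoint U S
    · rw [xProd_mul_xProd_of_disjoint hS, ← coe_xBasis, Module.Basis.repr_self,
        Finsupp.single_apply]
      refine if_congr ⟨fun e => ?_, fun e => e ▸ rfl⟩ rfl rfl
      rw [← Finset.union_sdiff_cancel_left hS, e, Finset.union_sdiff_cancel_left h]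
    · rw [xProd_mul_xProd_of_not_disjoint hS, map_zero, Finsupp.zero_apply, if_neg]
      rintro rfl
      exact hS h
  exact LinearMap.congr_fun this r

theorem restrictScalars_span_xProd_image (g : Set (Finset (Fin n))) :
    (Ideal.span (xProd k '' g)).restrictScalars k = xSpan k {T | ∃ U ∈ g, U ⊆ T} := by
  rw [← Submodule.span_smul_of_span_eq_top span_xProd]
  refine le_antisymm (Submodule.span_le.mpr ?_) (Submodule.span_le.mpr ?_)
  · rintro _ ⟨_, ⟨S, rfl⟩, _, ⟨U, hU, rfl⟩, rfl⟩
    change xProd k S * xProd k U ∈ _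
    by_cases h : Disjoint S U
    · rw [xProd_mul_xProd_of_disjoint h]
      exact Submodule.subset_span ⟨_, ⟨U, hU, Finset.subset_union_right⟩, rfl⟩
    · rw [xProd_mul_xProd_of_not_disjoint h]
      exact Submodule.zero_mem _
  · rintro _ ⟨T, ⟨U, hU, hUT⟩, rfl⟩
    rw [← Finset.sdiff_union_of_subset hUT, ← xProd_mul_xProd_of_disjoint Finset.sdiff_disjoint]
    exact Submodule.subset_span (Set.smul_mem_smul ⟨_, rfl⟩ ⟨U, hU, rfl⟩)

theorem restrictScalars_torsionBySet_xProd_image (g : Set (Finset (Fin n))) :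
    (Submodule.torsionBySet (Ring9 k n) (Ring9 k n) (xProd k '' g)).restrictScalars k =
      xSpan k {T | ∀ U ∈ g, ¬ Disjoint U T} := by
  refine le_antisymm (fun z hz => mem_xSpan_iff.mpr fun T hT => ?_) (Submodule.span_le.mpr ?_)
  · simp only [Set.mem_ofPred_eq, not_forall, not_not] at hT
    obtain ⟨U, hU, hUT⟩ := hT
    have hz : xProd k U * z = 0 :=
      (Submodule.mem_torsionBySet_iff _ _).mp hz ⟨_, U, hU, rfl⟩
    rw [← repr_xProd_mul hUT, hz, map_zero, Finsupp.zero_apply]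
  · rintro _ ⟨T, hT, rfl⟩
    refine (Submodule.mem_torsionBySet_iff _ _).mpr ?_
    rintro ⟨_, U, hU, rfl⟩
    exact xProd_mul_xProd_of_not_disjoint (hT U hU)

variable (k n) in
noncomputable abbrev maxIdeal9 : Ideal (Ring9 k n) := Ideal.span (Set.range (x9 k n))

theorem range_x9 : Set.range (x9 k n) = xProd k '' Set.range singleton := by
  rw [← Set.range_comp]
  exact congrArg Set.range (funext fun i => (xProd_singleton i).symm)

theorem I9_eq_span_xProd : I9 k n = Ideal.span (xProd k '' {S | S.card = 2}) := by
  refine congrArg Ideal.span (Set.ext fun p => ⟨?_, ?_⟩)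
  · rintro ⟨i, j, hij, rfl⟩
    exact ⟨{i, j}, Finset.card_pair hij.ne, Finset.prod_pair hij.ne⟩
  · rintro ⟨S, hS, rfl⟩
    obtain ⟨i, j, hij, rfl⟩ := Finset.card_eq_two.mp hS
    rcases hij.lt_or_gt with h | h
    · exact ⟨i, j, h, Finset.prod_pair hij⟩
    · exact ⟨j, i, h, by rw [Finset.pair_comm]; exact Finset.prod_pair h.ne⟩

theorem restrictScalars_I9 : (I9 k n).restrictScalars k = xSpan k {T | 2 ≤ T.card} := by
  rw [I9_eq_span_xProd, restrictScalars_span_xProd_image]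
  congr
  ext T
  exact ⟨fun ⟨U, hU, hUT⟩ => hU ▸ Finset.card_le_card hUT,
    fun h => (Finset.exists_subset_card_eq h).imp fun U ⟨hUT, hU⟩ => ⟨hU, hUT⟩⟩

theorem restrictScalars_torsionBySet_maxIdeal9 :
    (Submodule.torsionBySet (Ring9 k n) (Ring9 k n) (maxIdeal9 k n)).restrictScalars k =
      xSpan k {Finset.univ} := by
  rw [← Submodule.torsionBySet_eq_torsionBySet_span, range_x9,
    restrictScalars_torsionBySet_xProd_image]
  congr 1
  ext T
  simp [Finset.eq_univ_iff_forall]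

variable (k n) in
noncomputable abbrev annI9 : Submodule (Ring9 k n) (Ring9 k n) :=
  Submodule.torsionBySet (Ring9 k n) (Ring9 k n) (I9 k n)

theorem restrictScalars_annI9 : (annI9 k n).restrictScalars k = xSpan k {T | Tᶜ.card ≤ 1} := by
  rw [annI9, I9_eq_span_xProd, ← Submodule.torsionBySet_eq_torsionBySet_span,
    restrictScalars_torsionBySet_xProd_image]
  congr
  ext T
  simpa using Finset.forall_card_eq_two_not_disjoint_iff

theorem x9_mul_x9_mem_I9 (i j : Fin n) : x9 k n i * x9 k n j ∈ I9 k n := by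
  rcases lt_trichotomy i j with h | rfl | h
  · exact Ideal.subset_span ⟨i, j, h, rfl⟩
  · rw [x9_mul_self]
    exact Submodule.zero_mem _
  · rw [mul_comm]
    exact Ideal.subset_span ⟨j, i, h, rfl⟩

theorem maxIdeal9_mul_self_le : maxIdeal9 k n * maxIdeal9 k n ≤ I9 k n := by
  rw [Ideal.span_mul_span', Ideal.span_le]
  rintro _ ⟨_, ⟨i, rfl⟩, _, ⟨j, rfl⟩, rfl⟩
  exact x9_mul_x9_mem_I9 i j

theorem finrank_torsionBySet_maxIdeal9 :
    Module.finrank k (Submodule.torsionBySet (Ring9 k n) (Ring9 k n) (maxIdeal9 k n)) = 1 := by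
  rw [Submodule.finrank_eq_of_restrictScalars_eq restrictScalars_torsionBySet_maxIdeal9,
    ← Finset.coe_singleton, finrank_xSpan, Finset.card_singleton]

theorem one_notMem_I9 : (1 : Ring9 k n) ∉ I9 k n := by
  rw [← Submodule.restrictScalars_mem k, restrictScalars_I9, mem_xSpan_iff]
  intro h
  have h0 := h ∅ (by simp)
  rw [← xProd_empty, ← coe_xBasis, Module.Basis.repr_self, Finsupp.single_eq_same] at h0
  exact one_ne_zero h0

theorem linearIndependent_mk_x9 :
    LinearIndependent k fun i => (Submodule.Quotient.mk (x9 k n i) : M9 k n) := by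
  have hv : LinearIndependent k (xProd k ∘ singleton : Fin n → Ring9 k n) := by
    rw [← coe_xBasis]
    exact (xBasis k n).linearIndependent.comp _ Finset.singleton_injective
  have hdisj : Disjoint (Submodule.span k (Set.range (xProd k ∘ singleton : Fin n → Ring9 k n)))
      (LinearMap.ker ((I9 k n).mkQ.restrictScalars k)) := by
    rw [LinearMap.ker_restrictScalars, Submodule.ker_mkQ, restrictScalars_I9, Set.range_comp]
    refine disjoint_xSpan (Set.disjoint_left.mpr ?_)
    rintro _ ⟨i, rfl⟩ h
    simp at h
  simpa [Function.comp_def] using hv.map hdisj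

theorem repr_empty_eq_zero_of_mul_mem_I9 {i : Fin n} {r : Ring9 k n}
    (hr : x9 k n i * r ∈ I9 k n) : (xBasis k n).repr r ∅ = 0 := by
  rw [← Submodule.restrictScalars_mem k, restrictScalars_I9, mem_xSpan_iff] at hr
  rw [← repr_xProd_mul (Finset.disjoint_empty_right {i}), Finset.union_empty, xProd_singleton]
  exact hr {i} (by simp)

theorem mem_xSpan_range_singleton_sup_I9 {r : Ring9 k n} (hr : (xBasis k n).repr r ∅ = 0) :
    r ∈ xSpan k (Set.range singleton) ⊔ (I9 k n).restrictScalars k := by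
  rw [restrictScalars_I9, ← Submodule.span_union, ← Set.image_union, mem_xSpan_iff]
  intro S hS
  simp only [Set.mem_union, Set.mem_range, Set.mem_ofPred_eq, not_or, not_exists, not_le] at hS
  obtain ⟨hS₁, hS₂⟩ := hS
  obtain rfl : S = ∅ := by
    interval_cases h : S.card
    · exact Finset.card_eq_zero.mp h
    · obtain ⟨i, rfl⟩ := Finset.card_eq_one.mp h
      exact absurd rfl (hS₁ i)
  exact hr

theorem restrictScalars_torsionBySet_maxIdeal9_M9 (hn : n ≠ 0) :
    (Submodule.torsionBySet (Ring9 k n) (M9 k n) (maxIdeal9 k n)).restrictScalars k =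
      Submodule.span k (Set.range fun i => (Submodule.Quotient.mk (x9 k n i) : M9 k n)) := by
  refine le_antisymm (fun z hz => ?_) (Submodule.span_le.mpr ?_)
  · obtain ⟨r, rfl⟩ := Submodule.Quotient.mk_surjective _ z
    let i₀ : Fin n := ⟨0, Nat.pos_of_ne_zero hn⟩
    have hr : x9 k n i₀ * r ∈ I9 k n := by
      have := (Submodule.mem_torsionBySet_iff _ _).mp hz ⟨x9 k n i₀, Ideal.subset_span ⟨i₀, rfl⟩⟩
      rwa [← Submodule.Quotient.mk_smul, Submodule.Quotient.mk_eq_zero] at this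
    obtain ⟨a, ha, b, hb, rfl⟩ :=
      Submodule.mem_sup.mp (mem_xSpan_range_singleton_sup_I9 (repr_empty_eq_zero_of_mul_mem_I9 hr))
    rw [Submodule.Quotient.mk_add, (Submodule.Quotient.mk_eq_zero (I9 k n)).mpr hb, add_zero]
    have := Submodule.mem_map_of_mem (f := (I9 k n).mkQ.restrictScalars k) ha
    rw [Submodule.map_span, Set.image_image, ← Set.range_comp] at this
    simpa [Function.comp_def] using this
  · rintro _ ⟨i, rfl⟩
    rw [SetLike.mem_coe, Submodule.restrictScalars_mem,
      ← Submodule.torsionBySet_eq_torsionBySet_span, Submodule.mem_torsionBySet_iff]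
    rintro ⟨_, j, rfl⟩
    rw [← Submodule.Quotient.mk_smul, Submodule.Quotient.mk_eq_zero]
    exact x9_mul_x9_mem_I9 j i

theorem finrank_torsionBySet_maxIdeal9_M9 (hn : n ≠ 0) :
    Module.finrank k (Submodule.torsionBySet (Ring9 k n) (M9 k n) (maxIdeal9 k n)) = n := by
  rw [Submodule.finrank_eq_of_restrictScalars_eq (restrictScalars_torsionBySet_maxIdeal9_M9 hn),
    finrank_span_eq_card linearIndependent_mk_x9, Fintype.card_fin]

theorem finrank_annI9 : Module.finrank k (annI9 k n) = n + 1 := by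
  have : {T : Finset (Fin n) | Tᶜ.card ≤ 1} =
      ↑({T | Tᶜ.card ≤ 1} : Finset (Finset (Fin n))) := by
    simp
  rw [Submodule.finrank_eq_of_restrictScalars_eq restrictScalars_annI9, this,
    finrank_xSpan, Finset.card_filter_card_compl_le_one, Fintype.card_fin]

theorem maxIdeal9_smul_annI9 (hn : n ≠ 0) :
    maxIdeal9 k n • annI9 k n =
      Submodule.torsionBySet (Ring9 k n) (Ring9 k n) (maxIdeal9 k n) := by
  refine le_antisymm (Submodule.smul_le.mpr fun r hr v hv => ?_) fun z hz => ?_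
  · refine (Submodule.mem_torsionBySet_iff _ _).mpr fun ⟨a, ha⟩ => ?_
    rw [smul_smul]
    exact (Submodule.mem_torsionBySet_iff _ _).mp hv
      ⟨a * r, maxIdeal9_mul_self_le (Ideal.mul_mem_mul ha hr)⟩
  · have hz' : z ∈ xSpan k {Finset.univ} := restrictScalars_torsionBySet_maxIdeal9 (k := k) ▸ hz
    rw [xSpan, Set.image_singleton, Submodule.mem_span_singleton] at hz'
    obtain ⟨c, rfl⟩ := hz'
    refine Submodule.smul_of_tower_mem _ c ?_
    let i₀ : Fin n := ⟨0, Nat.pos_of_ne_zero hn⟩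
    rw [← Finset.insert_erase (Finset.mem_univ i₀), Finset.insert_eq,
      ← xProd_mul_xProd_of_disjoint (by simp), xProd_singleton]
    refine Submodule.smul_mem_smul (Ideal.subset_span ⟨i₀, rfl⟩) ?_
    rw [← Submodule.restrictScalars_mem k, restrictScalars_annI9]
    exact Submodule.subset_span ⟨_, by simp, rfl⟩

theorem finrank_maxIdeal9_smul_top_annI9 (hn : n ≠ 0) :
    Module.finrank k (maxIdeal9 k n • ⊤ : Submodule (Ring9 k n) (annI9 k n)) = 1 := by
  have e := (Submodule.equivMapOfInjective (annI9 k n).subtype Subtype.val_injective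
    (maxIdeal9 k n • ⊤)).restrictScalars k
  rw [e.finrank_eq, Submodule.map_smul'', Submodule.map_subtype_top, maxIdeal9_smul_annI9 hn,
    finrank_torsionBySet_maxIdeal9]

theorem finrank_K9_tensor_hom_M9 (hn : n ≠ 0) :
    Module.finrank k (K9 k n ⊗[Ring9 k n] (M9 k n →ₗ[Ring9 k n] Ring9 k n)) = n := by
  let e := TensorProduct.congr (LinearEquiv.refl (Ring9 k n) (K9 k n))
      (Ideal.quotientHomEquivTorsionBySet (I9 k n) (Ring9 k n)) ≪≫ₗ
    TensorProduct.quotTensorEquivQuotSMul (annI9 k n) (maxIdeal9 k n)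
  rw [(e.restrictScalars k).finrank_eq, Submodule.finrank_quotient, finrank_annI9,
    finrank_maxIdeal9_smul_top_annI9 hn, Nat.add_sub_cancel]

theorem I9_ne_bot (hn : 2 ≤ n) : I9 k n ≠ ⊥ := by
  have h01 : (⟨0, by omega⟩ : Fin n) < ⟨1, by omega⟩ := Fin.mk_lt_mk.mpr one_pos
  refine (Submodule.ne_bot_iff _).mpr ⟨_, Ideal.subset_span ⟨_, _, h01, rfl⟩, ?_⟩
  rw [← Finset.prod_pair h01.ne, ← xProd, ← coe_xBasis]
  exact (xBasis k n).ne_zero _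

end Ring9

/-- With `R = k[X_1,…,X_n]/(X_i^2)`, `I = (x_i x_j : i < j)` and
`M = R/I` (`n ≥ 2`): `M` is non-free, `type(M) = n`, `μ(Hom_R(M,R)) = n`, `type(R) = 1`,
and `type(M) = μ(Hom_R(M,R)) ⬝ type(R)`; here `type(L) = dim_k Hom_R(K, L)` and
`μ(L) = dim_k (K ⊗_R L)` where `K = R/m` is the residue field. -/
theorem stmt_9 (k : Type u) [Field k] (n : ℕ) (hn : 2 ≤ n) :
    ¬ Module.Free (Ring9 k n) (M9 k n) ∧
    Module.finrank k (K9 k n →ₗ[Ring9 k n] M9 k n) = n ∧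
    Module.finrank k ((K9 k n) ⊗[Ring9 k n] (M9 k n →ₗ[Ring9 k n] Ring9 k n)) = n ∧
    Module.finrank k (K9 k n →ₗ[Ring9 k n] Ring9 k n) = 1 ∧
    Module.finrank k (K9 k n →ₗ[Ring9 k n] M9 k n) =
      Module.finrank k ((K9 k n) ⊗[Ring9 k n] (M9 k n →ₗ[Ring9 k n] Ring9 k n)) *
        Module.finrank k (K9 k n →ₗ[Ring9 k n] Ring9 k n) := by
  have hn₀ : n ≠ 0 := by omega
  have type_M : Module.finrank k (K9 k n →ₗ[Ring9 k n] M9 k n) = n := by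
    rw [((Ideal.quotientHomEquivTorsionBySet _ _).restrictScalars k).finrank_eq,
      Ring9.finrank_torsionBySet_maxIdeal9_M9 hn₀]
  have type_R : Module.finrank k (K9 k n →ₗ[Ring9 k n] Ring9 k n) = 1 := by
    rw [((Ideal.quotientHomEquivTorsionBySet _ _).restrictScalars k).finrank_eq,
      Ring9.finrank_torsionBySet_maxIdeal9]
  have mu_dual := Ring9.finrank_K9_tensor_hom_M9 (k := k) hn₀
  refine ⟨Ideal.not_free_quotient (Ring9.I9_ne_bot hn)
    ((Ideal.ne_top_iff_one _).mpr Ring9.one_notMem_I9),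
    type_M, mu_dual, type_R, ?_⟩
  rw [type_M, mu_dual, type_R, mul_one]
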